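/- arXiv:1809.01972 — 4 statements merged into one kernel-verified Lean document; each statement's English description precedes it below -/
import Mathlib

section
/- Let T > 0, θ ≥ 0, K ≥ 0, λ ≥ 0, γ ≥ 0, K' = K + 1, let v̂ : [0,T) → ℝ be given by v̂(t) = (1 + K(T-t))/(T-t) + λ e^{K'(T-t)}, and let F(v) = λ - v^2 + θγ v/(γ+v) - θ v. Then for all t ∈ [max(T - 1/K, 0), T) one has -v̂'(t) - F(v̂(t)) ≥ 0. -/
theorem stmt_4 (T θ K lam γ : ℝ) (hT : 0 < T) (hθ : 0 ≤ θ) (hK : 0 ≤ K)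
    (hlam : 0 ≤ lam) (hγ : 0 ≤ γ)
    (vhat : ℝ → ℝ)
    (hvhat : ∀ t : ℝ, vhat t = (1 + K * (T - t)) / (T - t)
        + lam * Real.exp ((K + 1) * (T - t)))
    (F : ℝ → ℝ)
    (hF : ∀ v : ℝ, F v = lam - v ^ 2 + θ * γ * v / (γ + v) - θ * v) :
    ∀ t : ℝ, max (T - 1 / K) 0 ≤ t → t < T →
      -deriv vhat t - F (vhat t) ≥ 0 := by
  intro t _ htT
  have hs : 0 < T - t := by linarith
  have hsne : T - t ≠ 0 := ne_of_gt hs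
  have hvf : vhat = fun t => (1 + K * (T - t)) / (T - t)
      + lam * Real.exp ((K + 1) * (T - t)) := funext hvhat
  have hw : HasDerivAt (fun t : ℝ => T - t) (-1) t := by
    simpa using (hasDerivAt_id t).const_sub T
  have hu : HasDerivAt (fun t : ℝ => 1 + K * (T - t)) (K * (-1)) t :=
    (hw.const_mul K).const_add 1
  have h1 : HasDerivAt (fun t : ℝ => (1 + K * (T - t)) / (T - t))
      (1 / (T - t) ^ 2) t := by
    have := hu.div hw hsne
    refine this.congr_deriv ?_
    ring
  have h2 : HasDerivAt (fun t : ℝ => lam * Real.exp ((K + 1) * (T - t)))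
      (lam * (Real.exp ((K + 1) * (T - t)) * ((K + 1) * (-1)))) t :=
    ((hw.const_mul (K + 1)).exp).const_mul lam
  have hd : HasDerivAt vhat
      (1 / (T - t) ^ 2 + lam * (Real.exp ((K + 1) * (T - t)) * ((K + 1) * (-1)))) t := by
    rw [hvf]; exact h1.add h2
  rw [hd.deriv, hF, hvhat]
  set E := Real.exp ((K + 1) * (T - t)) with hE
  have hE1 : 1 ≤ E := by
    rw [hE]
    exact Real.one_le_exp (by positivity)
  set v := (1 + K * (T - t)) / (T - t) + lam * E with hv
  have hvA : v = 1 / (T - t) + K + lam * E := by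
    rw [hv]; field_simp
  have hvpos : 0 < v := by
    rw [hvA]
    have : 0 < 1 / (T - t) := by positivity
    nlinarith
  have hγv : 0 < γ + v := by linarith
  have hθterm : θ * γ * v / (γ + v) ≤ θ * v := by
    rw [div_le_iff₀ hγv]
    nlinarith [mul_nonneg hθ (mul_nonneg hvpos.le hvpos.le)]
  have hv2 : 1 / (T - t) ^ 2 ≤ v ^ 2 := by
    have h1s : 1 / (T - t) ≤ v := by
      rw [hvA]; nlinarith
    have : 0 < 1 / (T - t) := by positivity
    calc 1 / (T - t) ^ 2 = (1 / (T - t)) ^ 2 := by rw [div_pow]; norm_num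
      _ ≤ v ^ 2 := by nlinarith
  have hlamE : lam ≤ lam * ((K + 1) * E) := by
    have h1KE : 1 ≤ (K + 1) * E := by nlinarith
    nlinarith
  nlinarith [hθterm, hv2, hlamE]
end

section
/- Let T > 0, θ ≥ 0, γ ≥ 0, λ ≥ 0, and define v̌(t) = 1/(e^{θ(T-t)} (T-t)) for t ∈ [0,T). Then v̌ satisfies -v̌'(t) - F(v̌(t)) ≤ 0 for all t ∈ [0,T), where F(v) = λ - v^2 + θγv/(γ+v) - θv. -/
/-!
Write `s = T - t` and `v̌ = e^{-θ s} / s`. Then `v̌' = v̌ (θ + 1/s)`, while for `v ≥ 0` the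
nonnegative terms `λ` and `θγv/(γ+v)` can be dropped from `F`, leaving `-F(v) ≤ v² + θv`.
Hence `-v̌' - F(v̌) ≤ v̌ (v̌ - 1/s) ≤ 0`, because `e^{θ s} ≥ 1` gives `v̌ ≤ 1/s`.
-/

open Real

lemma hasDerivAt_one_div_exp_mul_sub (θ T t : ℝ) (ht : t ≠ T) :
    HasDerivAt (fun x ↦ 1 / (exp (θ * (T - x)) * (T - x)))
      (1 / (exp (θ * (T - t)) * (T - t)) * (θ + 1 / (T - t))) t := by
  have hs : T - t ≠ 0 := sub_ne_zero.mpr ht.symm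
  have hsub : HasDerivAt (fun x ↦ T - x) (-1) t := by
    simpa using (hasDerivAt_id t).const_sub T
  have hden : HasDerivAt (fun x ↦ exp (θ * (T - x)) * (T - x))
      (exp (θ * (T - t)) * (θ * -1) * (T - t) + exp (θ * (T - t)) * -1) t :=
    ((hsub.const_mul θ).exp).mul hsub
  refine ((hasDerivAt_const t (1 : ℝ)).fun_div hden
    (mul_ne_zero (exp_pos _).ne' hs)).congr_deriv ?_
  field_simp
  ring

lemma neg_sq_sub_mul_le (lam θ γ v : ℝ) (hlam : 0 ≤ lam) (hθ : 0 ≤ θ) (hγ : 0 ≤ γ)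
    (hv : 0 ≤ v) :
    -(v ^ 2 + θ * v) ≤ lam - v ^ 2 + θ * γ * v / (γ + v) - θ * v := by
  have : 0 ≤ θ * γ * v / (γ + v) := by positivity
  linarith

lemma one_div_exp_mul_le_one_div (θ s : ℝ) (hθ : 0 ≤ θ) (hs : 0 < s) :
    1 / (exp (θ * s) * s) ≤ 1 / s := by
  gcongr
  exact le_mul_of_one_le_left hs.le (one_le_exp (mul_nonneg hθ hs.le))

theorem stmt_5_general (T θ γ lam : ℝ) (hθ : 0 ≤ θ) (hγ : 0 ≤ γ) (hlam : 0 ≤ lam)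
    (vcheck : ℝ → ℝ)
    (hvcheck : ∀ t : ℝ, vcheck t = 1 / (Real.exp (θ * (T - t)) * (T - t)))
    (F : ℝ → ℝ)
    (hF : ∀ v : ℝ, F v = lam - v ^ 2 + θ * γ * v / (γ + v) - θ * v) :
    ∀ t : ℝ, 0 ≤ t → t < T → -deriv vcheck t - F (vcheck t) ≤ 0 := by
  intro t _ htT
  have hs : 0 < T - t := sub_pos.mpr htT
  have hderiv : deriv vcheck t = vcheck t * (θ + 1 / (T - t)) := by
    rw [funext hvcheck, (hasDerivAt_one_div_exp_mul_sub θ T t htT.ne).deriv]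
  have hv : 0 ≤ vcheck t := by rw [hvcheck]; positivity
  have hv_le : vcheck t ≤ 1 / (T - t) := by
    rw [hvcheck]; exact one_div_exp_mul_le_one_div θ (T - t) hθ hs
  calc -deriv vcheck t - F (vcheck t)
      ≤ -(vcheck t * (θ + 1 / (T - t))) + (vcheck t ^ 2 + θ * vcheck t) := by
        rw [hderiv, hF]; linarith [neg_sq_sub_mul_le lam θ γ (vcheck t) hlam hθ hγ hv]
    _ = vcheck t * (vcheck t - 1 / (T - t)) := by ring
    _ ≤ 0 := mul_nonpos_of_nonneg_of_nonpos hv (sub_nonpos.mpr hv_le)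

theorem stmt_5 (T θ γ lam : ℝ) (hT : 0 < T) (hθ : 0 ≤ θ) (hγ : 0 ≤ γ) (hlam : 0 ≤ lam)
    (vcheck : ℝ → ℝ)
    (hvcheck : ∀ t : ℝ, vcheck t = 1 / (Real.exp (θ * (T - t)) * (T - t)))
    (F : ℝ → ℝ)
    (hF : ∀ v : ℝ, F v = lam - v ^ 2 + θ * γ * v / (γ + v) - θ * v) :
    ∀ t : ℝ, 0 ≤ t → t < T → -deriv vcheck t - F (vcheck t) ≤ 0 :=
  stmt_5_general T θ γ lam hθ hγ hlam vcheck hvcheck F hF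
end

section
/- Let θ ≥ 0, T > 0, δ ∈ (0,T], and let r ↦ φ(r) = (1 - K(T-r))/(e^{θ(T-r)}(T-r)) for a constant K ≥ 0 with Kδ ≤ 1. If X_s = x * exp(-∫_{T-δ}^{s} φ(r) dr) for s ∈ [T-δ, T), then |X_s| ≤ C |x| (T-s)/δ for some constant C depending only on θ, K, δ, T; in particular X_s → 0 as s → T. -/
/-!
The rate `φ(r) = (1 - K(T-r)) / (e^{θ(T-r)} (T-r))` dominates `1/(T-r) - (θ + K)`, because
`e^{-θu} ≥ 1 - θu` and `e^{-θu} ≤ 1`. Since `∫_{T-δ}^s dr/(T-r) = log (δ/(T-s))`, this gives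
`∫_{T-δ}^s φ ≥ log (δ/(T-s)) - (θ + K) δ`, i.e. `|X_s| ≤ e^{(θ+K)δ} |x| (T-s)/δ`.
-/

open Real Filter Set MeasureTheory

lemma inv_sub_le_div_exp_mul {θ K u : ℝ} (hθ : 0 ≤ θ) (hK : 0 ≤ K) (hu : 0 < u) :
    u⁻¹ - (θ + K) ≤ (1 - K * u) / (exp (θ * u) * u) := by
  have h_lower : 1 - θ * u ≤ exp (-(θ * u)) := by linarith [add_one_le_exp (-(θ * u))]
  have h_upper : exp (-(θ * u)) ≤ 1 := exp_le_one_iff.mpr (by nlinarith)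
  have h_eq : (1 - K * u) / (exp (θ * u) * u) = exp (-(θ * u)) / u - K * exp (-(θ * u)) := by
    rw [exp_neg]; field_simp
  rw [h_eq]
  calc u⁻¹ - (θ + K) = (1 - θ * u) / u - K := by field_simp; ring
    _ ≤ exp (-(θ * u)) / u - K * exp (-(θ * u)) := by
      gcongr
      nlinarith

lemma integral_inv_const_sub {T a s : ℝ} (hsT : s < T) (has : a ≤ s) :
    ∫ r in a..s, (T - r)⁻¹ = log ((T - a) / (T - s)) := by
  rw [intervalIntegral.integral_comp_sub_left (fun x => x⁻¹) T,
    integral_inv_of_pos (by linarith) (by linarith)]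

lemma exp_neg_integral_le_of_inv_sub_le {φ : ℝ → ℝ} {T a s c : ℝ} (hsT : s < T) (has : a ≤ s)
    (hφ : IntervalIntegrable φ volume a s) (hle : ∀ r ∈ Icc a s, (T - r)⁻¹ - c ≤ φ r) :
    exp (-∫ r in a..s, φ r) ≤ exp (c * (s - a)) * ((T - s) / (T - a)) := by
  have h_inv : IntervalIntegrable (fun r => (T - r)⁻¹) volume a s := by
    refine ContinuousOn.intervalIntegrable (ContinuousOn.inv₀ (by fun_prop) fun r hr => ?_)
    rw [uIcc_of_le has] at hr
    exact (sub_pos.mpr (hr.2.trans_lt hsT)).ne'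
  have h_int : log ((T - a) / (T - s)) - c * (s - a) ≤ ∫ r in a..s, φ r := by
    calc log ((T - a) / (T - s)) - c * (s - a) = ∫ r in a..s, ((T - r)⁻¹ - c) := by
          rw [intervalIntegral.integral_sub h_inv intervalIntegrable_const,
            integral_inv_const_sub hsT has, intervalIntegral.integral_const, smul_eq_mul]
          ring
      _ ≤ ∫ r in a..s, φ r :=
          intervalIntegral.integral_mono_on has (h_inv.sub intervalIntegrable_const) hφ hle
  calc exp (-∫ r in a..s, φ r) ≤ exp (c * (s - a) - log ((T - a) / (T - s))) :=
        exp_le_exp.mpr (by linarith)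
    _ = exp (c * (s - a)) * ((T - s) / (T - a)) := by
      rw [exp_sub, exp_log (div_pos (by linarith) (by linarith))]
      field_simp

lemma tendsto_zero_of_abs_le_mul_sub {f : ℝ → ℝ} {a T C : ℝ} (haT : a < T)
    (hf : ∀ s, a ≤ s → s < T → |f s| ≤ C * (T - s)) :
    Tendsto f (nhdsWithin T (Iio T)) (nhds 0) := by
  have h_bound : ∀ᶠ s in nhdsWithin T (Iio T), ‖f s‖ ≤ C * (T - s) := by
    filter_upwards [eventually_nhdsWithin_of_eventually_nhds (eventually_gt_nhds haT),
      self_mem_nhdsWithin] with s has hsT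
    exact hf s has.le hsT
  refine squeeze_zero_norm' h_bound (tendsto_nhdsWithin_of_tendsto_nhds ?_)
  exact (by fun_prop : Continuous fun s => C * (T - s)).tendsto' T 0 (by simp)

theorem stmt_6_general (θ K T δ x : ℝ) (hθ : 0 ≤ θ) (hK : 0 ≤ K) (hδ : 0 < δ)
    (X : ℝ → ℝ)
    (hX : ∀ s : ℝ, X s = x * Real.exp (-∫ r in (T - δ)..s,
        (1 - K * (T - r)) / (Real.exp (θ * (T - r)) * (T - r)))) :
    ∃ C > 0, (∀ s : ℝ, T - δ ≤ s → s < T → |X s| ≤ C * |x| * (T - s) / δ) ∧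
      Tendsto X (nhdsWithin T (Set.Iio T)) (nhds 0) := by
  have h_bound : ∀ s, T - δ ≤ s → s < T → |X s| ≤ exp ((θ + K) * δ) * |x| * (T - s) / δ := by
    intro s hs hsT
    have h_pos : ∀ r ∈ Icc (T - δ) s, 0 < T - r := fun r hr => by linarith [hr.2]
    have hφ : IntervalIntegrable (fun r => (1 - K * (T - r)) / (exp (θ * (T - r)) * (T - r)))
        volume (T - δ) s := by
      refine ContinuousOn.intervalIntegrable ?_
      rw [uIcc_of_le hs]
      exact ContinuousOn.div (by fun_prop) (by fun_prop)
        fun r hr => (mul_pos (exp_pos _) (h_pos r hr)).ne'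
    have h_exp := exp_neg_integral_le_of_inv_sub_le hsT hs hφ fun r hr =>
      inv_sub_le_div_exp_mul hθ hK (h_pos r hr)
    have h_time : exp ((θ + K) * (s - (T - δ))) ≤ exp ((θ + K) * δ) :=
      exp_le_exp.mpr (mul_le_mul_of_nonneg_left (by linarith) (by positivity))
    rw [sub_sub_cancel] at h_exp
    rw [hX s, abs_mul, abs_of_pos (exp_pos _)]
    calc _ ≤ |x| * (exp ((θ + K) * δ) * ((T - s) / δ)) := by gcongr; exact h_exp.trans (by gcongr)
      _ = _ := by ring
  refine ⟨exp ((θ + K) * δ), exp_pos _, h_bound, ?_⟩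
  refine tendsto_zero_of_abs_le_mul_sub (a := T - δ) (C := exp ((θ + K) * δ) * |x| / δ)
    (by linarith) fun s hs hsT => ?_
  rw [div_mul_eq_mul_div]
  exact h_bound s hs hsT

theorem stmt_6 (θ K T δ x : ℝ) (hθ : 0 ≤ θ) (hK : 0 ≤ K) (hδ : 0 < δ) (hδT : δ ≤ T)
    (hKδ : K * δ ≤ 1)
    (X : ℝ → ℝ)
    (hX : ∀ s : ℝ, X s = x * Real.exp (-∫ r in (T - δ)..s,
        (1 - K * (T - r)) / (Real.exp (θ * (T - r)) * (T - r)))) :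
    ∃ C > 0, (∀ s : ℝ, T - δ ≤ s → s < T → |X s| ≤ C * |x| * (T - s) / δ) ∧
      Tendsto X (nhdsWithin T (Set.Iio T)) (nhds 0) :=
  stmt_6_general θ K T δ x hθ hK hδ X hX
end

section
/- Let a, b, θ ≥ 0 and T > 0. For the ODE a'(t) = -1 + a(t) + a(t)^2 - 2a(t)/(1+a(t)) on [0,T) with the singular terminal condition a(t) → +∞ as t → T, any solution a with a(t) ≥ 1/(2(T-t)) eventually satisfies the two-sided bound (1 - (T-t))/(e^{2(T-t)}(T-t)) ≤ a(t) ≤ (1 + (T-t))/(T-t) + C for t close to T and some constant C ≥ 0. -/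
/-!
Put `u = 1 / a`, so that `u → 0` at `T`. The ODE gives `a² - 3 ≤ a' ≤ a² + a`, i.e.
`-1 - u ≤ u' ≤ -1 + 3 u²`. Hence `s ↦ exp s * (1 + u s)` is nondecreasing and
`s ↦ u s - (T - s) + 4 (T - s)³` is nonincreasing once `u s ≤ 2 (T - s)`; comparing their
values at `t` with their limits `exp T` and `0` at `T` gives
`(T - t) - 4 (T - t)³ ≤ u t ≤ exp (T - t) - 1`, and both bounds of the theorem follow from
elementary inequalities for `T - t ≤ 1/5`.
-/

open Real Filter Set Topology

section Comparison

variable {f f' : ℝ → ℝ} {t T L : ℝ}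

theorem le_of_tendsto_nhdsLT_of_hasDerivAt_nonneg (htT : t < T)
    (hf : ∀ s ∈ Ico t T, HasDerivAt f (f' s) s) (hf' : ∀ s ∈ Ioo t T, 0 ≤ f' s)
    (hlim : Tendsto f (𝓝[<] T) (𝓝 L)) : f t ≤ L := by
  have hmono : MonotoneOn f (Ico t T) := by
    refine monotoneOn_of_hasDerivWithinAt_nonneg (convex_Ico t T)
      (fun s hs => (hf s hs).continuousAt.continuousWithinAt)
      (fun s hs => (hf s (interior_subset hs)).hasDerivWithinAt) ?_
    rw [interior_Ico]
    exact hf'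
  refine ge_of_tendsto hlim ?_
  filter_upwards [Ioo_mem_nhdsLT htT] with s hs
  exact hmono (left_mem_Ico.2 htT) (Ioo_subset_Ico_self hs) hs.1.le

theorem ge_of_tendsto_nhdsLT_of_hasDerivAt_nonpos (htT : t < T)
    (hf : ∀ s ∈ Ico t T, HasDerivAt f (f' s) s) (hf' : ∀ s ∈ Ioo t T, f' s ≤ 0)
    (hlim : Tendsto f (𝓝[<] T) (𝓝 L)) : L ≤ f t :=
  neg_le_neg_iff.1 <| le_of_tendsto_nhdsLT_of_hasDerivAt_nonneg (f := fun s => -f s)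
    (f' := fun s => -f' s) htT (fun s hs => (hf s hs).neg)
    (fun s hs => neg_nonneg.2 (hf' s hs)) hlim.neg

end Comparison

noncomputable def reducedHJBRHS (x : ℝ) : ℝ := -1 + x + x ^ 2 - 2 * x / (1 + x)

theorem reducedHJBRHS_le_sq_add_self {x : ℝ} (hx : 0 ≤ x) : reducedHJBRHS x ≤ x ^ 2 + x := by
  have : 0 ≤ 2 * x / (1 + x) := by positivity
  unfold reducedHJBRHS
  linarith

theorem sq_sub_three_le_reducedHJBRHS {x : ℝ} (hx : 0 ≤ x) : x ^ 2 - 3 ≤ reducedHJBRHS x := by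
  have : 2 * x / (1 + x) ≤ 2 := by
    rw [div_le_iff₀ (by linarith)]
    linarith
  unfold reducedHJBRHS
  linarith

theorem one_sub_div_exp_two_mul_mul_le_inv_exp_sub_one {δ : ℝ} (hδ : 0 < δ) :
    (1 - δ) / (exp (2 * δ) * δ) ≤ (exp δ - 1)⁻¹ := by
  have hE : 0 < exp δ - 1 := by linarith [add_one_lt_exp hδ.ne']
  rw [div_le_iff₀ (by positivity), inv_mul_eq_div, le_div_iff₀ hE]
  calc (1 - δ) * (exp δ - 1) ≤ exp (-δ) * (exp δ - 1) :=
        mul_le_mul_of_nonneg_right (by linarith [add_one_le_exp (-δ)]) hE.le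
    _ = 1 - exp (-δ) := by rw [mul_sub, ← exp_add, neg_add_cancel, exp_zero, mul_one]
    _ ≤ δ := by linarith [add_one_le_exp (-δ)]
    _ ≤ exp (2 * δ) * δ := le_mul_of_one_le_left hδ.le (one_le_exp (by positivity))

theorem div_one_add_le_sub_four_mul_cube {δ : ℝ} (h0 : 0 ≤ δ) (h1 : δ ≤ 1 / 5) :
    δ / (1 + δ) ≤ δ - 4 * δ ^ 3 := by
  have : 0 ≤ δ ^ 2 * (1 - 4 * δ - 4 * δ ^ 2) := mul_nonneg (sq_nonneg δ) (by nlinarith)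
  rw [div_le_iff₀ (by linarith)]
  nlinarith

section BlowUp

variable {a a' : ℝ → ℝ} {t T : ℝ}

theorem inv_le_exp_sub_one_of_deriv_le (htT : t < T) (hpos : ∀ s ∈ Ico t T, 0 < a s)
    (ha : ∀ s ∈ Ico t T, HasDerivAt a (a' s) s)
    (ha' : ∀ s ∈ Ico t T, a' s ≤ a s ^ 2 + a s)
    (hlim : Tendsto (fun s => (a s)⁻¹) (𝓝[<] T) (𝓝 0)) :
    (a t)⁻¹ ≤ exp (T - t) - 1 := by
  have hF : ∀ s ∈ Ico t T, HasDerivAt (fun s => exp s * (1 + (a s)⁻¹))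
      (exp s * (1 + (a s)⁻¹ - a' s / a s ^ 2)) s := fun s hs =>
    ((hasDerivAt_exp s).mul (((ha s hs).inv (hpos s hs).ne').const_add 1)).congr_deriv
      (by simp only [Pi.inv_apply]; ring)
  have hF' : ∀ s ∈ Ioo t T, 0 ≤ exp s * (1 + (a s)⁻¹ - a' s / a s ^ 2) := by
    intro s hs
    have has := hpos s (Ioo_subset_Ico_self hs)
    have hdiv : a' s / a s ^ 2 ≤ 1 + (a s)⁻¹ := by
      rw [div_le_iff₀ (by positivity)]
      have := ha' s (Ioo_subset_Ico_self hs)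
      field_simp
      linarith
    exact mul_nonneg (exp_pos s).le (by linarith)
  have hFlim : Tendsto (fun s => exp s * (1 + (a s)⁻¹)) (𝓝[<] T) (𝓝 (exp T)) := by
    simpa using
      ((continuous_exp.tendsto T).mono_left nhdsWithin_le_nhds).mul (hlim.const_add 1)
  have hFt := le_of_tendsto_nhdsLT_of_hasDerivAt_nonneg htT hF hF' hFlim
  rw [exp_sub, le_sub_iff_add_le, le_div_iff₀ (exp_pos t)]
  linarith

theorem sub_sub_four_mul_cube_le_inv_of_le_deriv (htT : t < T)
    (hpos : ∀ s ∈ Ico t T, 0 < a s) (hinv : ∀ s ∈ Ico t T, (a s)⁻¹ ≤ 2 * (T - s))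
    (ha : ∀ s ∈ Ico t T, HasDerivAt a (a' s) s)
    (ha' : ∀ s ∈ Ico t T, a s ^ 2 - 3 ≤ a' s)
    (hlim : Tendsto (fun s => (a s)⁻¹) (𝓝[<] T) (𝓝 0)) :
    (T - t) - 4 * (T - t) ^ 3 ≤ (a t)⁻¹ := by
  have hdist : ∀ s : ℝ, HasDerivAt (fun s => T - s) (-1) s := fun s =>
    (hasDerivAt_id s).const_sub T
  have hG : ∀ s ∈ Ico t T, HasDerivAt (fun s => (a s)⁻¹ - (T - s) + 4 * (T - s) ^ 3)
      (1 - a' s / a s ^ 2 - 12 * (T - s) ^ 2) s := fun s hs =>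
    ((((ha s hs).inv (hpos s hs).ne').sub (hdist s)).add
      (((hdist s).pow 3).const_mul 4)).congr_deriv (by push_cast; ring)
  have hG' : ∀ s ∈ Ioo t T, 1 - a' s / a s ^ 2 - 12 * (T - s) ^ 2 ≤ 0 := by
    intro s hs
    have has := hpos s (Ioo_subset_Ico_self hs)
    have hu := hinv s (Ioo_subset_Ico_self hs)
    have hdiv : 1 - 3 * (a s)⁻¹ ^ 2 ≤ a' s / a s ^ 2 := by
      rw [le_div_iff₀ (by positivity)]
      have := ha' s (Ioo_subset_Ico_self hs)
      field_simp
      linarith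
    have hu0 : 0 < (a s)⁻¹ := inv_pos.2 has
    nlinarith
  have hGlim : Tendsto (fun s => (a s)⁻¹ - (T - s) + 4 * (T - s) ^ 3) (𝓝[<] T) (𝓝 0) := by
    have hTs : Tendsto (fun s => T - s) (𝓝[<] T) (𝓝 0) := by
      simpa using ((continuous_sub_left T).tendsto T).mono_left nhdsWithin_le_nhds
    simpa using (hlim.sub hTs).add ((hTs.pow 3).const_mul 4)
  have hGt := ge_of_tendsto_nhdsLT_of_hasDerivAt_nonpos htT hG hG' hGlim
  linarith

end BlowUp

theorem stmt_16 (T : ℝ) (hT : 0 < T) (a : ℝ → ℝ)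
    (hode : ∀ t ∈ Ico (0 : ℝ) T,
      HasDerivAt a (-1 + a t + a t ^ 2 - 2 * a t / (1 + a t)) t)
    (hsing : Tendsto a (nhdsWithin T (Iio T)) atTop)
    (hlb : ∀ t ∈ Ico (0 : ℝ) T, a t ≥ 1 / (2 * (T - t))) :
    ∃ C : ℝ, 0 ≤ C ∧ ∃ δ₀ : ℝ, 0 < δ₀ ∧
      ∀ t : ℝ, T - δ₀ < t → t < T →
        (1 - (T - t)) / (Real.exp (2 * (T - t)) * (T - t)) ≤ a t ∧
        a t ≤ (1 + (T - t)) / (T - t) + C := by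
  refine ⟨0, le_rfl, min T (1 / 5), lt_min hT (by norm_num), fun t ht htT => ?_⟩
  have hδ : 0 < T - t := sub_pos.2 htT
  have hδ5 : T - t ≤ 1 / 5 := by linarith [min_le_right T (1 / 5)]
  have hsub : Ico t T ⊆ Ico 0 T := Ico_subset_Ico_left (by linarith [min_le_left T (1 / 5)])
  have hpos : ∀ s ∈ Ico t T, 0 < a s := fun s hs =>
    lt_of_lt_of_le (by have := hs.2; positivity) (hlb s (hsub hs))
  have hinv : ∀ s ∈ Ico t T, (a s)⁻¹ ≤ 2 * (T - s) := fun s hs =>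
    (inv_le_comm₀ (hpos s hs) (by linarith [hs.2])).2
      ((one_div _).symm.trans_le (hlb s (hsub hs)))
  have ha : ∀ s ∈ Ico t T, HasDerivAt a (reducedHJBRHS (a s)) s := fun s hs => hode s (hsub hs)
  have hlim := hsing.inv_tendsto_atTop
  have hat := hpos t (left_mem_Ico.2 htT)
  constructor
  · calc _ ≤ (exp (T - t) - 1)⁻¹ := one_sub_div_exp_two_mul_mul_le_inv_exp_sub_one hδ
      _ ≤ a t := (inv_le_comm₀ hat (by linarith [add_one_lt_exp hδ.ne'])).1 <|
          inv_le_exp_sub_one_of_deriv_le htT hpos ha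
            (fun s hs => reducedHJBRHS_le_sq_add_self (hpos s hs).le) hlim
  · calc a t ≤ ((T - t) / (1 + (T - t)))⁻¹ := (le_inv_comm₀ hat (by positivity)).2 <|
          (div_one_add_le_sub_four_mul_cube hδ.le hδ5).trans <|
            sub_sub_four_mul_cube_le_inv_of_le_deriv htT hpos hinv ha
              (fun s hs => sq_sub_three_le_reducedHJBRHS (hpos s hs).le) hlim
      _ = (1 + (T - t)) / (T - t) := inv_div _ _
      _ ≤ _ := (add_zero _).ge
end
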